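/- arXiv:1509.09193 — 3 statements merged into one kernel-verified Lean document; each statement's English description precedes it below -/
import Mathlib

section
/- For an odd prime p and a continuous function f : ℤ_p → ℂ_p, the limit I₋₁(f) = lim_{N→∞} ∑_{x=0}^{p^N−1} f(x)(−1)^x defining the fermionic p-adic integral exists in ℂ_p. -/
open Finset Filter

private lemma sum_range_mul_aux {M : Type*} [AddCommMonoid M] (g : ℕ → M) (a : ℕ) :
    ∀ b : ℕ, ∑ x ∈ Finset.range (a * b), g x
      = ∑ j ∈ Finset.range b, ∑ i ∈ Finset.range a, g (i + a * j) := by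
  intro b
  induction b with
  | zero => simp
  | succ b ih =>
    rw [Finset.sum_range_succ, ← ih, Nat.mul_succ, Finset.range_eq_Ico,
      ← Finset.sum_Ico_consecutive g (Nat.zero_le (a * b)) (Nat.le_add_right _ a),
      ← Finset.range_eq_Ico]
    congr 1
    rw [Finset.sum_Ico_eq_sum_range, Nat.add_sub_cancel_left]
    exact Finset.sum_congr rfl fun k _ => by rw [add_comm]

/-- for an odd prime p and a continuous f : ℤ_p → ℂ_p, the limit
defining the fermionic p-adic integral exists.  Since ℂ_p is not available in
Mathlib, the codomain is a complete nonarchimedean nontrivially normed field `K`. -/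
theorem fermionic_integral_exists (p : ℕ) [Fact p.Prime] (hp : Odd p)
    (K : Type*) [NontriviallyNormedField K] [CompleteSpace K] [IsUltrametricDist K]
    (f : ℤ_[p] → K) (hf : Continuous f) :
    ∃ I : K, Filter.Tendsto
      (fun N : ℕ => ∑ x ∈ Finset.range (p ^ N), (-1 : K) ^ x * f (x : ℤ_[p]))
      Filter.atTop (nhds I) := by
  set S : ℕ → K := fun N => ∑ x ∈ Finset.range (p ^ N), (-1 : K) ^ x * f (x : ℤ_[p]) with hS
  -- key algebraic identity for the successive difference
  have key : ∀ N : ℕ, S (N + 1) - S N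
      = ∑ j ∈ Finset.range p, ∑ i ∈ Finset.range (p ^ N),
          (-1 : K) ^ i * ((-1 : K) ^ j * (f ((i : ℤ_[p]) + (p : ℤ_[p]) ^ N * j) - f i)) := by
    intro N
    have h1 : S (N + 1) = ∑ j ∈ Finset.range p, ∑ i ∈ Finset.range (p ^ N),
        (-1 : K) ^ i * ((-1 : K) ^ j * f ((i : ℤ_[p]) + (p : ℤ_[p]) ^ N * j)) := by
      rw [hS]
      simp only [pow_succ]
      rw [sum_range_mul_aux (fun x => (-1 : K) ^ x * f (x : ℤ_[p])) (p ^ N) p]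
      refine Finset.sum_congr rfl fun j _ => Finset.sum_congr rfl fun i _ => ?_
      have hodd : Odd (p ^ N) := hp.pow
      rw [pow_add, pow_mul, hodd.neg_one_pow]
      push_cast
      ring_nf
    have h2 : S N = ∑ j ∈ Finset.range p, ∑ i ∈ Finset.range (p ^ N),
        (-1 : K) ^ i * ((-1 : K) ^ j * f (i : ℤ_[p])) := by
      rw [Finset.sum_comm]
      rw [hS]
      refine Finset.sum_congr rfl fun i _ => ?_
      rw [← Finset.mul_sum, ← Finset.sum_mul, neg_one_geom_sum, if_neg (Nat.not_even_iff_odd.mpr hp)]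
      ring
    rw [h1, h2, ← Finset.sum_sub_distrib]
    refine Finset.sum_congr rfl fun j _ => ?_
    rw [← Finset.sum_sub_distrib]
    refine Finset.sum_congr rfl fun i _ => ?_
    ring
  -- the differences tend to zero
  have hd : Tendsto (fun N => S (N + 1) - S N) atTop (nhds 0) := by
    rw [NormedAddCommGroup.tendsto_nhds_zero]
    intro ε hε
    have huc : UniformContinuous f := CompactSpace.uniformContinuous_of_continuous hf
    obtain ⟨δ, hδ, hδ'⟩ := Metric.uniformContinuous_iff.mp huc (ε / 2) (half_pos hε)
    -- choose M with p^(-M) < δ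
    have htend : Tendsto (fun N : ℕ => ((p : ℝ) ^ N)⁻¹) atTop (nhds 0) := by
      apply tendsto_inv_atTop_zero.comp
      apply tendsto_pow_atTop_atTop_of_one_lt
      exact_mod_cast (Fact.out : p.Prime).one_lt
    obtain ⟨M, hM⟩ := (Metric.tendsto_atTop.mp htend δ hδ)
    filter_upwards [Filter.eventually_ge_atTop M] with N hN
    have hpN : ((p : ℝ) ^ N)⁻¹ < δ := by
      have := hM N hN
      rwa [Real.dist_eq, sub_zero, abs_of_nonneg (by positivity)] at this
    have hbound : ‖S (N + 1) - S N‖ ≤ ε / 2 := by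
      rw [key N]
      apply IsUltrametricDist.norm_sum_le_of_forall_le_of_nonneg (le_of_lt (half_pos hε))
      intro j _
      apply IsUltrametricDist.norm_sum_le_of_forall_le_of_nonneg (le_of_lt (half_pos hε))
      intro i _
      rw [norm_mul, norm_mul, norm_pow, norm_pow, norm_neg, norm_one, one_pow, one_pow,
        one_mul, one_mul]
      apply le_of_lt
      rw [← dist_eq_norm]
      apply hδ'
      rw [dist_eq_norm, add_sub_cancel_left]
      calc ‖(p : ℤ_[p]) ^ N * (j : ℤ_[p])‖ ≤ ‖(p : ℤ_[p]) ^ N‖ * 1 := by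
            exact le_trans (norm_mul_le _ _)
              (mul_le_mul_of_nonneg_left (PadicInt.norm_le_one _) (norm_nonneg _))
        _ = ((p : ℝ) ^ N)⁻¹ := by
            rw [mul_one, PadicInt.norm_p_pow, zpow_neg, zpow_natCast]
        _ < δ := hpN
    exact lt_of_le_of_lt hbound (half_lt_self hε)
  -- summability of the differences gives convergence of S
  have hsum : Summable (fun N => S (N + 1) - S N) := by
    apply NonarchimedeanAddGroup.summable_of_tendsto_cofinite_zero
    rwa [Nat.cofinite_eq_atTop]
  obtain ⟨L, hL⟩ := hsum
  refine ⟨S 0 + L, ?_⟩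
  have := hL.tendsto_sum_nat
  have heq : ∀ N, S 0 + ∑ k ∈ Finset.range N, (S (k + 1) - S k) = S N := by
    intro N
    rw [Finset.sum_range_sub]
    ring
  have : Tendsto (fun N => S 0 + ∑ k ∈ Finset.range N, (S (k + 1) - S k)) atTop
      (nhds (S 0 + L)) := tendsto_const_nhds.add this
  simpa only [heq] using this
end

section
/- Let d be an odd positive integer and χ : ℤ → ℂ a Dirichlet character of conductor d. Define the generalized degenerate Euler polynomials 𝓔_{n,λ,χ}(x) by the formal power series identity ((1+λt)^{d/λ} + 1) · ∑_{n≥0} 𝓔_{n,λ,χ}(x) t^n/n! = 2 (∑_{a=0}^{d−1} (−1)^a χ(a) (1+λt)^{a/λ}) · (1+λt)^{x/λ}, where (1+λt)^{y/λ} := ∑_{n≥0}(y|λ)_n t^n/n!. Then for every odd natural number m and every k ≥ 0, 𝓔_{k,λ,χ}(md) + 𝓔_{k,λ,χ}(0) = 2 ∑_{l=0}^{md−1} (−1)^l χ(l) (l|λ)_k. -/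
open scoped Nat

/-- The degenerate falling factorial `(x|λ)_n = x(x−λ)⋯(x−(n−1)λ)`. -/
noncomputable def degFall {R : Type*} [CommRing R] (x lam : R) (n : ℕ) : R :=
  ∏ j ∈ Finset.range n, (x - (j : R) * lam)

/-- `(1+λt)^{y/λ} := ∑_{n≥0} (y|λ)_n tⁿ/n!` as a formal power series. -/
noncomputable def degSeries {R : Type*} [CommRing R] [Algebra ℚ R] (y lam : R) :
    PowerSeries R :=
  PowerSeries.mk fun n => (n ! : ℚ)⁻¹ • degFall y lam n

/-- The generating identity defining the generalized degenerate Euler polynomials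
`𝓔_{n,λ,χ}(x)` attached to χ, with parameter `mu`:
`((1+μt)^{d/μ}+1)·∑ 𝓔_{n,μ,χ}(x) tⁿ/n! = 2(∑_{a<d}(−1)^a χ(a)(1+μt)^{a/μ})(1+μt)^{x/μ}`. -/
noncomputable def genDegEulerRel (d : ℕ) (χ : DirichletCharacter ℂ d) (mu : ℂ)
    (E : ℕ → Polynomial ℂ) : Prop :=
  (degSeries (Polynomial.C (d : ℂ)) (Polynomial.C mu) + 1) *
      PowerSeries.mk (fun n => (n ! : ℂ)⁻¹ • E n)
    = 2 * ((∑ a ∈ Finset.range d,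
        ((-1 : ℂ) ^ a * χ (a : ZMod d)) • degSeries (Polynomial.C (a : ℂ)) (Polynomial.C mu)) *
        degSeries Polynomial.X (Polynomial.C mu))

/-! Write `S(y) = (1+λt)^{y/λ}`; the degenerate Vandermonde identity gives `S(y) S(z) = S(y+z)`.
Specialising the defining identity at `x = md` and `x = 0` and adding, with
`A = ∑_{a<d} (-1)^a χ(a) S(a)`, gives `(S(d)+1)(F_{md} + F_0) = 2 A (S(d)^m + 1)`.
For odd `m`, `S(d)^m + 1 = (S(d)+1) ∑_{i<m} (-S(d))^i`, and for odd `d` writing `l = id + a` turns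
`A ∑_{i<m} (-S(d))^i` into `∑_{l<md} (-1)^l χ(l) S(l)`. Cancelling the unit `S(d)+1` and reading
off the coefficient of `t^k` gives the identity. -/

open PowerSeries Finset

section DegenerateFalling

variable {R : Type*} [CommRing R]

theorem degFall_zero (x lam : R) : degFall x lam 0 = 1 := prod_range_zero _

theorem degFall_succ (x lam : R) (n : ℕ) :
    degFall x lam (n + 1) = degFall x lam n * (x - n * lam) := prod_range_succ _ _

theorem degFall_zero_left_succ (lam : R) (n : ℕ) : degFall 0 lam (n + 1) = 0 :=
  prod_eq_zero (mem_range.2 n.succ_pos) (by simp)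

theorem map_degFall {S : Type*} [CommRing S] (f : R →+* S) (x lam : R) (n : ℕ) :
    f (degFall x lam n) = degFall (f x) (f lam) n := by
  simp [degFall, map_prod]

theorem degFall_add (y z lam : R) (n : ℕ) :
    degFall (y + z) lam n = ∑ ij ∈ antidiagonal n,
      (n.choose ij.1 : R) * (degFall y lam ij.1 * degFall z lam ij.2) := by
  induction n with
  | zero => simp [degFall_zero]
  | succ n ih =>
    rw [sum_antidiagonal_choose_succ_mul (fun i j => degFall y lam i * degFall z lam j),
      degFall_succ, ih, sum_mul, ← sum_add_distrib]
    refine sum_congr rfl fun ij hij => ?_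
    rw [HasAntidiagonal.mem_antidiagonal] at hij
    have hn : (n : R) = ij.1 + ij.2 := by rw [← hij, Nat.cast_add]
    rw [Nat.choose_symm_of_eq_add hij.symm, degFall_succ, degFall_succ, hn]
    ring

end DegenerateFalling

section DegenerateExponential

variable {R : Type*} [CommRing R] [Algebra ℚ R]

theorem coeff_degSeries (y lam : R) (n : ℕ) :
    coeff n (degSeries y lam) = (n ! : ℚ)⁻¹ • degFall y lam n := coeff_mk _ _

theorem constantCoeff_degSeries (y lam : R) : constantCoeff (degSeries y lam) = 1 := by
  rw [← coeff_zero_eq_constantCoeff_apply, coeff_degSeries, degFall_zero]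
  simp

theorem degSeries_zero (lam : R) : degSeries 0 lam = 1 := by
  ext (_ | n)
  · simp [coeff_degSeries, degFall_zero]
  · simp [coeff_degSeries, degFall_zero_left_succ]

theorem factorial_inv_mul_factorial_inv {K : Type*} [Field K] [CharZero K] (i j : ℕ) :
    (i ! : K)⁻¹ * (j ! : K)⁻¹ = ((i + j).choose i : K) * ((i + j)! : K)⁻¹ := by
  have h := Nat.add_choose_mul_factorial_mul_factorial i j
  rw [← Nat.choose_symm_add] at h
  have hc : ((i + j).choose i : K) ≠ 0 := by
    exact_mod_cast (Nat.choose_pos (Nat.le_add_right i j)).ne'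
  rw [← h]
  push_cast
  field_simp

theorem degSeries_mul (y z lam : R) :
    degSeries y lam * degSeries z lam = degSeries (y + z) lam := by
  ext n
  rw [coeff_mul, coeff_degSeries, degFall_add, smul_sum]
  refine sum_congr rfl fun ij hij => ?_
  rw [HasAntidiagonal.mem_antidiagonal] at hij
  rw [coeff_degSeries, coeff_degSeries, smul_mul_smul_comm, factorial_inv_mul_factorial_inv, hij,
    Algebra.smul_def, Algebra.smul_def, map_mul, map_natCast]
  ring

theorem degSeries_natCast_mul (n : ℕ) (y lam : R) :
    degSeries ((n : R) * y) lam = degSeries y lam ^ n := by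
  induction n with
  | zero => simp [degSeries_zero]
  | succ n ih => rw [Nat.cast_succ, add_one_mul, ← degSeries_mul, ih, pow_succ]

theorem isUnit_degSeries_add_one (y lam : R) : IsUnit (degSeries y lam + 1) := by
  rw [isUnit_iff_constantCoeff, map_add, constantCoeff_degSeries, map_one, one_add_one_eq_two,
    ← map_ofNat (algebraMap ℚ R) 2]
  exact (isUnit_iff_ne_zero.2 two_ne_zero).map _

theorem degSeries_add_one_mul_geom_sum {m : ℕ} (hm : Odd m) (y lam : R) :
    (degSeries y lam + 1) * ∑ i ∈ range m, (-degSeries y lam) ^ i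
      = degSeries ((m : R) * y) lam + 1 := by
  rw [mul_comm, add_comm _ 1, ← sub_neg_eq_add 1, geom_sum_mul_neg, hm.neg_pow, sub_neg_eq_add,
    add_comm, degSeries_natCast_mul]

theorem map_degSeries {S : Type*} [CommRing S] [Algebra ℚ S] (f : R →+* S) (y lam : R) :
    map f (degSeries y lam) = degSeries (f y) (f lam) := by
  ext n
  rw [coeff_map, coeff_degSeries, coeff_degSeries, map_rat_smul, map_degFall]

end DegenerateExponential

theorem Finset.sum_range_mul_eq_sum_sum {M : Type*} [AddCommMonoid M] (f : ℕ → M) (m d : ℕ) :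
    ∑ l ∈ range (m * d), f l = ∑ i ∈ range m, ∑ a ∈ range d, f (i * d + a) := by
  induction m with
  | zero => simp
  | succ m ih => rw [add_one_mul, sum_range_add, ih, sum_range_succ]

section DirichletTwist

variable {d : ℕ} (χ : DirichletCharacter ℂ d) (lam : ℂ)

noncomputable def altCharDegSeries (N : ℕ) : PowerSeries ℂ :=
  ∑ l ∈ range N, ((-1 : ℂ) ^ l * χ l) • degSeries (l : ℂ) lam

theorem coeff_altCharDegSeries (N k : ℕ) :
    coeff k (altCharDegSeries χ lam N)
      = (k ! : ℂ)⁻¹ * ∑ l ∈ range N, (-1 : ℂ) ^ l * χ l * degFall (l : ℂ) lam k := by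
  simp only [altCharDegSeries, map_sum, coeff_smul, coeff_degSeries, mul_sum, Rat.smul_def,
    Rat.cast_inv, Rat.cast_natCast, smul_eq_mul]
  exact sum_congr rfl fun _ _ => by ring

theorem altCharDegSeries_mul_of_odd (hd : Odd d) (m : ℕ) :
    altCharDegSeries χ lam (m * d)
      = altCharDegSeries χ lam d * ∑ i ∈ range m, (-degSeries (d : ℂ) lam) ^ i := by
  rw [altCharDegSeries, altCharDegSeries, sum_mul_sum, sum_comm, sum_range_mul_eq_sum_sum]
  refine sum_congr rfl fun i _ => sum_congr rfl fun a _ => ?_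
  have hsign : (-1 : ℂ) ^ (i * d + a) = (-1) ^ i * (-1) ^ a := by
    rw [pow_add, mul_comm i d, pow_mul, hd.neg_one_pow]
  have hχ : χ ((i * d + a : ℕ) : ZMod d) = χ a := by simp
  have hseries :
      degSeries ((i * d + a : ℕ) : ℂ) lam = degSeries (d : ℂ) lam ^ i * degSeries (a : ℂ) lam := by
    rw [← degSeries_natCast_mul, degSeries_mul, Nat.cast_add, Nat.cast_mul]
  rw [hsign, hχ, hseries]
  simp only [smul_eq_C_mul, map_mul, map_pow, map_neg, map_one]
  ring

end DirichletTwist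

theorem genDegEulerRel.map_eval {d : ℕ} {χ : DirichletCharacter ℂ d} {lam : ℂ}
    {E : ℕ → Polynomial ℂ} (hE : genDegEulerRel d χ lam E) (c : ℂ) :
    (degSeries (d : ℂ) lam + 1) * mk (fun n => (n ! : ℂ)⁻¹ * (E n).eval c)
      = 2 * (altCharDegSeries χ lam d * degSeries c lam) := by
  have h := congrArg (map (Polynomial.evalRingHom c)) hE
  have hmk : map (Polynomial.evalRingHom c) (mk fun n => (n ! : ℂ)⁻¹ • E n)
      = mk fun n => (n ! : ℂ)⁻¹ * (E n).eval c := by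
    ext n
    simp
  have hsmul (a : ℂ) (f : PowerSeries (Polynomial ℂ)) :
      map (Polynomial.evalRingHom c) (a • f) = a • map (Polynomial.evalRingHom c) f := by
    ext n
    simp
  simpa [map_degSeries, hmk, hsmul, map_ofNat, altCharDegSeries] using h

theorem genDegEuler_boundary_general (d : ℕ) (hd : Odd d)
    (χ : DirichletCharacter ℂ d) (lam : ℂ)
    (E : ℕ → Polynomial ℂ) (hE : genDegEulerRel d χ lam E)
    (m : ℕ) (hm : Odd m) (k : ℕ) :
    (E k).eval ((m * d : ℕ) : ℂ) + (E k).eval 0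
      = 2 * ∑ l ∈ Finset.range (m * d),
          (-1 : ℂ) ^ l * χ (l : ZMod d) * degFall (l : ℂ) lam k := by
  set egf : ℂ → PowerSeries ℂ := fun c => mk fun n => (n ! : ℂ)⁻¹ * (E n).eval c
  have hsum : egf ((m * d : ℕ) : ℂ) + egf 0 = 2 * altCharDegSeries χ lam (m * d) := by
    refine (isUnit_degSeries_add_one (d : ℂ) lam).mul_left_cancel ?_
    calc (degSeries (d : ℂ) lam + 1) * (egf ((m * d : ℕ) : ℂ) + egf 0)
        = 2 * (altCharDegSeries χ lam d * (degSeries ((m : ℂ) * d) lam + 1)) := by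
          rw [mul_add, hE.map_eval, hE.map_eval, degSeries_zero, Nat.cast_mul]
          ring
      _ = (degSeries (d : ℂ) lam + 1) * (2 * altCharDegSeries χ lam (m * d)) := by
          rw [← degSeries_add_one_mul_geom_sum hm, altCharDegSeries_mul_of_odd χ lam hd]
          ring
  have hk := congrArg (coeff k) hsum
  rw [map_add, coeff_mk, coeff_mk, ← map_ofNat (C (R := ℂ)) 2, coeff_C_mul,
    coeff_altCharDegSeries, ← mul_add, mul_left_comm] at hk
  exact mul_left_cancel₀ (inv_ne_zero (by exact_mod_cast k.factorial_ne_zero)) hk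

/-- for odd d, χ of conductor d, odd m and k ≥ 0,
`𝓔_{k,λ,χ}(md) + 𝓔_{k,λ,χ}(0) = 2 ∑_{l=0}^{md−1} (−1)^l χ(l) (l|λ)_k`. -/
theorem genDegEuler_boundary (d : ℕ) (hd0 : 0 < d) (hd : Odd d)
    (χ : DirichletCharacter ℂ d) (hχ : χ.conductor = d) (lam : ℂ)
    (E : ℕ → Polynomial ℂ) (hE : genDegEulerRel d χ lam E)
    (m : ℕ) (hm : Odd m) (k : ℕ) :
    (E k).eval ((m * d : ℕ) : ℂ) + (E k).eval 0
      = 2 * ∑ l ∈ Finset.range (m * d),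
          (-1 : ℂ) ^ l * χ (l : ZMod d) * degFall (l : ℂ) lam k :=
  genDegEuler_boundary_general d hd χ lam E hE m hm k
end

section
/- Define the Euler polynomials E_n(x) by (e^t + 1)·∑_{n≥0} E_n(x) t^n/n! = 2 e^{xt} as formal power series over ℚ[x]. Let w₁, w₂ be odd positive integers. Then for all n ≥ 0: w₂^n ∑_{l=0}^{w₂−1} (−1)^l E_n(w₁ x + (w₁/w₂) l) = w₁^n ∑_{l=0}^{w₁−1} (−1)^l E_n(w₂ x + (w₂/w₁) l) as polynomials in x over ℚ. -/
open scoped Nat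

/-- `e^{yt} := ∑_{n≥0} yⁿ tⁿ/n!` as a formal power series. -/
noncomputable def expSer {R : Type*} [CommRing R] [Algebra ℚ R] (y : R) : PowerSeries R :=
  PowerSeries.mk fun n => (n ! : ℚ)⁻¹ • y ^ n

/-! The generating function `∑ E_n(y) tⁿ/n!` is `2e^{yt}/(eᵗ + 1)`. Substituting
`y = w₁x + (w₁/w₂)l` and `t ↦ w₂t` and summing with signs, the generating function `A(t)` of the
left-hand side satisfies `(e^{w₂t} + 1) A(t) = 2e^{w₁w₂xt} ∑_{l<w₂} (-e^{w₁t})^l`; as `w₂` is odd,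
`(e^{w₁t} + 1)(e^{w₂t} + 1) A(t) = 2e^{w₁w₂xt}(e^{w₁w₂t} + 1)`. This is symmetric in `w₁, w₂`, and
`e^{w₁t} + 1`, `e^{w₂t} + 1` can be cancelled in the domain `ℚ[x]⟦t⟧`. -/

section ExpGenFun

open PowerSeries

variable {R : Type*} [CommRing R] [Algebra ℚ R]

noncomputable def egf (a : ℕ → R) : PowerSeries R :=
  PowerSeries.mk fun n => (n ! : ℚ)⁻¹ • a n

lemma egf_injective : Function.Injective (egf : (ℕ → R) → PowerSeries R) := by
  intro a b h
  funext n
  have hn := congrArg (coeff n) h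
  simp only [egf, coeff_mk] at hn
  exact smul_right_injective R (inv_ne_zero (Nat.cast_ne_zero.2 n.factorial_ne_zero)) hn

lemma egf_sum {ι : Type*} (s : Finset ι) (a : ι → ℕ → R) :
    egf (fun n => ∑ i ∈ s, a i n) = ∑ i ∈ s, egf (a i) := by
  ext n
  simp [egf, Finset.smul_sum]

lemma egf_smul (c : ℚ) (a : ℕ → R) : egf (fun n => c • a n) = c • egf a := by
  ext n
  simp [egf, smul_comm c]

lemma rescale_egf (c : R) (a : ℕ → R) : rescale c (egf a) = egf fun n => c ^ n * a n := by
  ext n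
  simp [egf]

lemma map_egf {S : Type*} [CommRing S] [Algebra ℚ S] (f : R →ₐ[ℚ] S) (a : ℕ → R) :
    map (f : R →+* S) (egf a) = egf (f ∘ a) := by
  ext n
  simp [egf]

lemma expSer_eq_egf (y : R) : expSer y = egf (y ^ ·) := rfl

lemma rescale_expSer (c y : R) : rescale c (expSer y) = expSer (c * y) := by
  simp [expSer_eq_egf, rescale_egf, mul_pow]

lemma map_expSer {S : Type*} [CommRing S] [Algebra ℚ S] (f : R →ₐ[ℚ] S) (y : R) :
    map (f : R →+* S) (expSer y) = expSer (f y) := by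
  simp [expSer_eq_egf, map_egf, Function.comp_def]

lemma expSer_eq_rescale_exp (y : R) : expSer y = rescale y (exp R) := by
  ext n
  simp [expSer, exp, Algebra.smul_def, mul_comm]

lemma expSer_add (a b : R) : expSer (a + b) = expSer a * expSer b := by
  simp only [expSer_eq_rescale_exp, exp_mul_exp_eq_exp_add]

lemma expSer_zero : expSer (0 : R) = 1 := by
  simp [expSer_eq_rescale_exp]

lemma expSer_nsmul (m : ℕ) (y : R) : expSer (m • y) = expSer y ^ m := by
  induction m with
  | zero => simp [expSer_zero]
  | succ m ih => rw [succ_nsmul, expSer_add, ih, pow_succ]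

lemma expSer_add_one_ne_zero [Nontrivial R] (y : R) : expSer y + 1 ≠ 0 := by
  have := algebraRat.charZero R
  intro h
  have hcoeff := congrArg constantCoeff h
  simp [expSer, one_add_one_eq_two] at hcoeff

end ExpGenFun

section IsEulerSeq

variable {R : Type*} [CommRing R] [Algebra ℚ R]

/-- `IsEulerSeq E y` says that `E n = E_n(y)` for all `n`. -/
def IsEulerSeq (E : ℕ → R) (y : R) : Prop :=
  (expSer (1 : R) + 1) * egf E = 2 * expSer y

lemma IsEulerSeq.map {S : Type*} [CommRing S] [Algebra ℚ S] {E : ℕ → R} {y : R}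
    (hE : IsEulerSeq E y) (f : R →ₐ[ℚ] S) : IsEulerSeq (f ∘ E) (f y) := by
  have h := congrArg (PowerSeries.map (f : R →+* S)) hE
  simpa [IsEulerSeq, map_egf, map_expSer, map_ofNat] using h

lemma IsEulerSeq.rescale {E : ℕ → R} {y : R} (hE : IsEulerSeq E y) (c : R) :
    (expSer c + 1) * egf (fun n => c ^ n * E n) = 2 * expSer (c * y) := by
  have h := congrArg (PowerSeries.rescale c) hE
  simpa [rescale_egf, rescale_expSer, map_ofNat] using h

end IsEulerSeq

lemma Odd.add_one_mul_geom_sum_neg {R : Type*} [CommRing R] (x : R) {m : ℕ} (hm : Odd m) :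
    (x + 1) * ∑ l ∈ Finset.range m, (-x) ^ l = x ^ m + 1 := by
  have h := geom_sum_mul (-x) m
  rw [hm.neg_pow] at h
  linear_combination -h

section AlternatingEulerSum

open Polynomial

noncomputable def altEulerSum (E : ℕ → ℚ[X]) (a : ℚ) (m n : ℕ) : ℚ[X] :=
  C ((m : ℚ) ^ n) * ∑ l ∈ Finset.range m, C ((-1 : ℚ) ^ l) * (E n).comp (C a * X + C (a / m * l))

variable {E : ℕ → ℚ[X]}

lemma IsEulerSeq.comp (hE : IsEulerSeq E X) (q : ℚ[X]) :
    IsEulerSeq (fun n => (E n).comp q) q := by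
  simpa [Function.comp_def, comp_eq_aeval] using hE.map (aeval q)

lemma egf_altEulerSum (a : ℚ) (m : ℕ) :
    egf (altEulerSum E a m) = ∑ l ∈ Finset.range m,
      (-1 : ℚ) ^ l • egf (fun n => C (m : ℚ) ^ n * (E n).comp (C a * X + C (a / m * l))) := by
  simp only [← egf_smul, ← egf_sum]
  congr 1
  funext n
  simp only [altEulerSum, Finset.mul_sum, smul_eq_C_mul, C_pow]
  exact Finset.sum_congr rfl fun l _ => mul_left_comm _ _ _

lemma add_one_mul_egf_altEulerSum (hE : IsEulerSeq E X) (a : ℚ) {m : ℕ} (hm : m ≠ 0) :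
    (expSer (C (m : ℚ)) + 1) * egf (altEulerSum E a m) =
      2 * expSer (C (a * m) * X) * ∑ l ∈ Finset.range m, (-expSer (C a)) ^ l := by
  have hshift (l : ℕ) : C (m : ℚ) * (C a * X + C (a / m * l)) = C (a * m) * X + l • C a := by
    have h : (m : ℚ) * (a / m * l) = l * a := by field_simp
    rw [nsmul_eq_mul, ← C_eq_natCast, mul_add, ← mul_assoc, ← C_mul, ← C_mul, ← C_mul, h,
      mul_comm (m : ℚ)]
  rw [egf_altEulerSum, Finset.mul_sum, Finset.mul_sum]
  refine Finset.sum_congr rfl fun l _ => ?_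
  rw [mul_smul_comm, (hE.comp _).rescale, hshift, expSer_add, expSer_nsmul,
    neg_pow (expSer (C a)), Algebra.smul_def, map_pow, map_neg, map_one]
  ring

lemma add_one_mul_add_one_mul_egf_altEulerSum (hE : IsEulerSeq E X) (a : ℚ) {m : ℕ}
    (hm : Odd m) :
    (expSer (C a) + 1) * ((expSer (C (m : ℚ)) + 1) * egf (altEulerSum E a m)) =
      2 * expSer (C (a * m) * X) * (expSer (C (a * m)) + 1) := by
  have hpow : expSer (C a) ^ m = expSer (C (a * m)) := by
    rw [← expSer_nsmul, nsmul_eq_mul, ← C_eq_natCast, ← C_mul, mul_comm (m : ℚ)]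
  rw [add_one_mul_egf_altEulerSum hE a hm.pos.ne', mul_left_comm, hm.add_one_mul_geom_sum_neg,
    hpow]

end AlternatingEulerSum

theorem euler_symmetry_general (w₁ w₂ : ℕ)
    (hw₁ : Odd w₁) (hw₂ : Odd w₂)
    (Eu : ℕ → Polynomial ℚ)
    (hEu : (expSer (1 : Polynomial ℚ) + 1) * PowerSeries.mk (fun n => (n ! : ℚ)⁻¹ • Eu n)
      = 2 * expSer Polynomial.X)
    (n : ℕ) :
    Polynomial.C ((w₂ : ℚ) ^ n) *
        ∑ l ∈ Finset.range w₂,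
          Polynomial.C ((-1 : ℚ) ^ l) *
            (Eu n).comp (Polynomial.C (w₁ : ℚ) * Polynomial.X +
              Polynomial.C ((w₁ : ℚ) / (w₂ : ℚ) * l))
      = Polynomial.C ((w₁ : ℚ) ^ n) *
          ∑ l ∈ Finset.range w₁,
            Polynomial.C ((-1 : ℚ) ^ l) *
              (Eu n).comp (Polynomial.C (w₂ : ℚ) * Polynomial.X +
                Polynomial.C ((w₂ : ℚ) / (w₁ : ℚ) * l)) := by
  have h₁ := add_one_mul_add_one_mul_egf_altEulerSum hEu w₁ hw₂
  have h₂ := add_one_mul_add_one_mul_egf_altEulerSum hEu w₂ hw₁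
  rw [mul_comm (w₂ : ℚ)] at h₂
  have h : egf (altEulerSum Eu w₁ w₂) = egf (altEulerSum Eu w₂ w₁) := by
    refine mul_left_cancel₀ (expSer_add_one_ne_zero (Polynomial.C (w₁ : ℚ)))
      (mul_left_cancel₀ (expSer_add_one_ne_zero (Polynomial.C (w₂ : ℚ))) ?_)
    linear_combination h₁ - h₂
  exact congrFun (egf_injective h) n

/-- with `E_n(x)` the classical Euler polynomials, defined by
`(e^t+1)·∑ E_n(x) tⁿ/n! = 2 e^{xt}`, and w₁, w₂ odd positive integers,
`w₂ⁿ ∑_{l<w₂} (−1)^l E_n(w₁x + (w₁/w₂)l) = w₁ⁿ ∑_{l<w₁} (−1)^l E_n(w₂x + (w₂/w₁)l)`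
as polynomials in x over ℚ. -/
theorem euler_symmetry (w₁ w₂ : ℕ) (hw₁0 : 0 < w₁) (hw₂0 : 0 < w₂)
    (hw₁ : Odd w₁) (hw₂ : Odd w₂)
    (Eu : ℕ → Polynomial ℚ)
    (hEu : (expSer (1 : Polynomial ℚ) + 1) * PowerSeries.mk (fun n => (n ! : ℚ)⁻¹ • Eu n)
      = 2 * expSer Polynomial.X)
    (n : ℕ) :
    Polynomial.C ((w₂ : ℚ) ^ n) *
        ∑ l ∈ Finset.range w₂,
          Polynomial.C ((-1 : ℚ) ^ l) *
            (Eu n).comp (Polynomial.C (w₁ : ℚ) * Polynomial.X +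
              Polynomial.C ((w₁ : ℚ) / (w₂ : ℚ) * l))
      = Polynomial.C ((w₁ : ℚ) ^ n) *
          ∑ l ∈ Finset.range w₁,
            Polynomial.C ((-1 : ℚ) ^ l) *
              (Eu n).comp (Polynomial.C (w₂ : ℚ) * Polynomial.X +
                Polynomial.C ((w₂ : ℚ) / (w₁ : ℚ) * l)) :=
  euler_symmetry_general w₁ w₂ hw₁ hw₂ Eu hEu n
end
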